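/- arXiv:2502.15183 — 4 statements merged into one kernel-verified Lean document; each statement's English description precedes it below -/
import Mathlib

section
/- Let B be a real d×d matrix and a > 0 a constant such that the operator norm satisfies ‖e^{sB}‖ ≤ e^{−as} for all s ≥ 0. Let Π be a measure on ℝ^d and n ≥ 1 an integer with ∫_{|y|>1} |y|^n dΠ(y) < ∞. Then ∫_0^∞ ( ∫_{ℝ^d} 1_{{|e^{sB}y| > 1}} |e^{sB}y|^n dΠ(y) ) ds ≤ (1/(n a)) ∫_{|y|>1} |y|^n dΠ(y) < ∞. In particular the measure Π_∞ defined by ∫ f dΠ_∞ = ∫_0^∞ ∫ f(e^{sB}y) dΠ(y) ds satisfies ∫_{|x|>1} |x|^n dΠ_∞(x) < ∞. -/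
open MeasureTheory Measure Matrix Set
open scoped ENNReal NNReal InnerProductSpace

noncomputable section

namespace LevyOU

/-- Euclidean space `ℝ^d`. -/
abbrev E (d : ℕ) := EuclideanSpace ℝ (Fin d)

variable {d : ℕ}

/-- The matrix exponential `e^{sB}` acting on `ℝ^d` as a continuous linear map. -/
def expCLM (B : Matrix (Fin d) (Fin d) ℝ) (s : ℝ) : E d →L[ℝ] E d :=
  Matrix.toEuclideanCLM (𝕜 := ℝ) (NormedSpace.exp (s • B))

/-- `Q_t := ∫_0^t e^{sB} Q e^{sBᵀ} ds` (entrywise Bochner integral). -/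
def Qmat (B Q : Matrix (Fin d) (Fin d) ℝ) (t : ℝ) : Matrix (Fin d) (Fin d) ℝ :=
  Matrix.of fun i j => ∫ s in Set.Ioc (0 : ℝ) t,
    (NormedSpace.exp (s • B) * Q * (NormedSpace.exp (s • B))ᵀ) i j

/-- `Q_∞ := ∫_0^∞ e^{sB} Q e^{sBᵀ} ds` (entrywise Bochner integral). -/
def Qinf (B Q : Matrix (Fin d) (Fin d) ℝ) : Matrix (Fin d) (Fin d) ℝ :=
  Matrix.of fun i j => ∫ s in Set.Ioi (0 : ℝ),
    (NormedSpace.exp (s • B) * Q * (NormedSpace.exp (s • B))ᵀ) i j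

/-- The jump part of the Lévy–Khintchine integrand:
`∫ (exp(i⟨e^{sBᵀ}ξ, y⟩) − 1 − i⟨e^{sBᵀ}ξ, y⟩ 1_{|y|≤1}) dΠ(y)`. -/
def jumpTerm (B : Matrix (Fin d) (Fin d) ℝ) (Pim : Measure (E d)) (ξ : E d) (s : ℝ) : ℂ :=
  ∫ y, (Complex.exp (Complex.I * (⟪expCLM Bᵀ s ξ, y⟫_ℝ : ℂ)) - 1 -
      (if ‖y‖ ≤ 1 then Complex.I * (⟪expCLM Bᵀ s ξ, y⟫_ℝ : ℂ) else 0)) ∂Pim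

/-- The Lévy–Khintchine exponent `Ψ_t` for finite `t`. -/
def Psi (B Q : Matrix (Fin d) (Fin d) ℝ) (Pim : Measure (E d)) (t : ℝ) (ξ : E d) : ℂ :=
  -(1 / 2 : ℂ) * ((⟪(Matrix.toEuclideanCLM (𝕜 := ℝ) (Qmat B Q t)) ξ, ξ⟫_ℝ : ℝ) : ℂ) +
    ∫ s in Set.Ioc (0 : ℝ) t, jumpTerm B Pim ξ s

/-- The Lévy–Khintchine exponent `Ψ_∞`. -/
def PsiInf (B Q : Matrix (Fin d) (Fin d) ℝ) (Pim : Measure (E d)) (ξ : E d) : ℂ :=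
  -(1 / 2 : ℂ) * ((⟪(Matrix.toEuclideanCLM (𝕜 := ℝ) (Qinf B Q)) ξ, ξ⟫_ℝ : ℝ) : ℂ) +
    ∫ s in Set.Ioi (0 : ℝ), jumpTerm B Pim ξ s

/-- The characteristic function of a measure on `ℝ^d`. -/
def charFn (ν : Measure (E d)) (ξ : E d) : ℂ :=
  ∫ x, Complex.exp (Complex.I * (⟪ξ, x⟫_ℝ : ℂ)) ∂ν

/-- The Lévy–Ornstein–Uhlenbeck semigroup `P_t f (x) = ∫ f(e^{tB}x + y) dρ_t(y)`. -/
def P {F : Type*} [NormedAddCommGroup F] [NormedSpace ℝ F]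
    (B : Matrix (Fin d) (Fin d) ℝ) (ρ : ℝ → Measure (E d)) (t : ℝ) (f : E d → F)
    (x : E d) : F :=
  ∫ y, f (expCLM B t x + y) ∂(ρ t)

/-- The set `ℕ(λ) = {n₁λ₁ + ⋯ + n_dλ_d : nᵢ ∈ ℕ}`. -/
def NLambda (lam : Fin d → ℂ) : Set ℂ :=
  {θ : ℂ | ∃ n : Fin d → ℕ, θ = ∑ i, (n i : ℂ) * lam i}

/-- `lam` enumerates the complex eigenvalues of the real matrix `B`
counted with algebraic multiplicity. -/
def IsEigList (B : Matrix (Fin d) (Fin d) ℝ) (lam : Fin d → ℂ) : Prop :=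
  (B.map (fun x : ℝ => (x : ℂ))).charpoly.roots = Multiset.map lam Finset.univ.val

/-! Since `‖e^{sB}‖ ≤ e^{-as} ≤ 1`, a point `y` with `|e^{sB} y| > 1` already has `|y| > 1`, and
there `|e^{sB} y|^n ≤ e^{-nas} |y|^n`. So the inner integral at time `s` is at most `e^{-nas}`
times the tail moment of `Π`, and integrating `e^{-nas}` over `s > 0` gives the factor `1/(na)`. -/

theorem setLIntegral_norm_pow_comp_le {𝕜 X Y : Type*} [NontriviallyNormedField 𝕜]
    [SeminormedAddCommGroup X] [NormedSpace 𝕜 X] [SeminormedAddCommGroup Y] [NormedSpace 𝕜 Y]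
    [MeasurableSpace X] (L : X →L[𝕜] Y) {r : ℝ} (hL : ‖L‖ ≤ r) (hr : r ≤ 1)
    (μ : Measure X) (n : ℕ) :
    ∫⁻ y in {y | 1 < ‖L y‖}, ENNReal.ofReal (‖L y‖ ^ n) ∂μ ≤
      ENNReal.ofReal (r ^ n) * ∫⁻ y in {y | 1 < ‖y‖}, ENNReal.ofReal (‖y‖ ^ n) ∂μ := by
  have hr₀ : 0 ≤ r := (norm_nonneg L).trans hL
  have hLy : ∀ y, ‖L y‖ ≤ r * ‖y‖ := L.le_of_opNorm_le hL
  have hsub : {y | 1 < ‖L y‖} ⊆ {y | 1 < ‖y‖} := fun y (hy : 1 < ‖L y‖) =>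
    show 1 < ‖y‖ by nlinarith [hLy y, norm_nonneg y]
  have hpow : ∀ y,
      ENNReal.ofReal (‖L y‖ ^ n) ≤ ENNReal.ofReal (r ^ n) * ENNReal.ofReal (‖y‖ ^ n) := fun y => by
    rw [← ENNReal.ofReal_mul (pow_nonneg hr₀ n), ← mul_pow]
    exact ENNReal.ofReal_le_ofReal (pow_le_pow_left₀ (norm_nonneg _) (hLy y) n)
  calc ∫⁻ y in {y | 1 < ‖L y‖}, ENNReal.ofReal (‖L y‖ ^ n) ∂μ
      ≤ ∫⁻ y in {y | 1 < ‖y‖}, ENNReal.ofReal (‖L y‖ ^ n) ∂μ := lintegral_mono_set hsub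
    _ ≤ ∫⁻ y in {y | 1 < ‖y‖}, ENNReal.ofReal (r ^ n) * ENNReal.ofReal (‖y‖ ^ n) ∂μ :=
        lintegral_mono hpow
    _ = _ := lintegral_const_mul' _ _ ENNReal.ofReal_ne_top

theorem lintegral_ofReal_exp_neg_mul_Ioi {c : ℝ} (hc : 0 < c) :
    ∫⁻ s in Ioi (0 : ℝ), ENNReal.ofReal (Real.exp (-c * s)) = ENNReal.ofReal (1 / c) := by
  rw [← ofReal_integral_eq_lintegral_ofReal (exp_neg_integrableOn_Ioi 0 hc)
    (Filter.Eventually.of_forall fun s => (Real.exp_pos _).le),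
    integral_exp_mul_Ioi (neg_neg_of_pos hc)]
  congr 1
  field_simp
  simp

theorem levy_measure_moment_transfer_general
    {d : ℕ}
    (B : Matrix (Fin d) (Fin d) ℝ) (a : ℝ) (ha : 0 < a)
    (hop : ∀ s : ℝ, 0 ≤ s →
      ‖Matrix.toEuclideanCLM (𝕜 := ℝ) (NormedSpace.exp (s • B))‖ ≤ Real.exp (-a * s))
    (Pim : Measure (E d)) (n : ℕ) (hn : 1 ≤ n)
    (hmom : ∫⁻ y in {y : E d | 1 < ‖y‖}, ENNReal.ofReal (‖y‖ ^ n) ∂Pim < ⊤) :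
    (∫⁻ s in Set.Ioi (0 : ℝ),
        ∫⁻ y in {y : E d | 1 < ‖expCLM B s y‖}, ENNReal.ofReal (‖expCLM B s y‖ ^ n) ∂Pim) ≤
      ENNReal.ofReal (1 / (n * a)) *
        ∫⁻ y in {y : E d | 1 < ‖y‖}, ENNReal.ofReal (‖y‖ ^ n) ∂Pim ∧
    (∫⁻ s in Set.Ioi (0 : ℝ),
        ∫⁻ y in {y : E d | 1 < ‖expCLM B s y‖}, ENNReal.ofReal (‖expCLM B s y‖ ^ n) ∂Pim) < ⊤ := by
  set M := ∫⁻ y in {y : E d | 1 < ‖y‖}, ENNReal.ofReal (‖y‖ ^ n) ∂Pim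
  have hna : 0 < (n : ℝ) * a := mul_pos (by exact_mod_cast hn) ha
  have hslice : ∀ s ∈ Ioi (0 : ℝ),
      ∫⁻ y in {y : E d | 1 < ‖expCLM B s y‖}, ENNReal.ofReal (‖expCLM B s y‖ ^ n) ∂Pim ≤
        ENNReal.ofReal (Real.exp (-(n * a) * s)) * M := fun s (hs : 0 < s) => by
    have hdecay : Real.exp (-a * s) ^ n = Real.exp (-(n * a) * s) := by
      rw [← Real.exp_nat_mul]; ring_nf
    rw [← hdecay]
    exact setLIntegral_norm_pow_comp_le _ (hop s hs.le)
      (Real.exp_le_one_iff.mpr (by nlinarith)) Pim n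
  have hbound : (∫⁻ s in Ioi (0 : ℝ),
      ∫⁻ y in {y : E d | 1 < ‖expCLM B s y‖}, ENNReal.ofReal (‖expCLM B s y‖ ^ n) ∂Pim) ≤
        ENNReal.ofReal (1 / (n * a)) * M :=
    calc _ ≤ ∫⁻ s in Ioi (0 : ℝ), ENNReal.ofReal (Real.exp (-(n * a) * s)) * M :=
          setLIntegral_mono' measurableSet_Ioi hslice
      _ = ENNReal.ofReal (1 / (n * a)) * M := by
          rw [lintegral_mul_const' _ _ hmom.ne, lintegral_ofReal_exp_neg_mul_Ioi hna]
  exact ⟨hbound, hbound.trans_lt (ENNReal.mul_lt_top ENNReal.ofReal_lt_top hmom)⟩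

/-- Lemma 6.3, polynomial moments: transfer of polynomial moments
from `Π` to `Π_∞ = ∫_0^∞ Π ∘ e^{-sB} ds`. -/
theorem levy_measure_moment_transfer
    {d : ℕ} (hd : 0 < d)
    (B : Matrix (Fin d) (Fin d) ℝ) (a : ℝ) (ha : 0 < a)
    (hop : ∀ s : ℝ, 0 ≤ s →
      ‖Matrix.toEuclideanCLM (𝕜 := ℝ) (NormedSpace.exp (s • B))‖ ≤ Real.exp (-a * s))
    (Pim : Measure (E d)) (n : ℕ) (hn : 1 ≤ n)
    (hmom : ∫⁻ y in {y : E d | 1 < ‖y‖}, ENNReal.ofReal (‖y‖ ^ n) ∂Pim < ⊤) :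
    (∫⁻ s in Set.Ioi (0 : ℝ),
        ∫⁻ y in {y : E d | 1 < ‖expCLM B s y‖}, ENNReal.ofReal (‖expCLM B s y‖ ^ n) ∂Pim) ≤
      ENNReal.ofReal (1 / (n * a)) *
        ∫⁻ y in {y : E d | 1 < ‖y‖}, ENNReal.ofReal (‖y‖ ^ n) ∂Pim ∧
    (∫⁻ s in Set.Ioi (0 : ℝ),
        ∫⁻ y in {y : E d | 1 < ‖expCLM B s y‖}, ENNReal.ofReal (‖expCLM B s y‖ ^ n) ∂Pim) < ⊤ :=
  levy_measure_moment_transfer_general B a ha hop Pim n hn hmom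
end LevyOU
end
end

section
/- Let B be a real d×d matrix and a > 0 with ‖e^{sB}‖ ≤ e^{−as} for all s ≥ 0, and let Π be a measure on ℝ^d with ∫_{|y|>1} log|y| dΠ(y) < ∞ and ∫_{|y|>1} e^{κ|y|} dΠ(y) < ∞ for some κ > 0. Then ∫_0^∞ ( ∫_{ℝ^d} 1_{{|e^{sB}y| > 1}} e^{κ|e^{sB}y|} dΠ(y) ) ds < ∞. In particular, the measure Π_∞ defined by ∫ f dΠ_∞ = ∫_0^∞ ∫ f(e^{sB}y) dΠ(y) ds satisfies ∫_{|x|>1} e^{κ|x|} dΠ_∞(x) < ∞. -/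
open MeasureTheory Measure Matrix Set
open scoped ENNReal NNReal InnerProductSpace

noncomputable section

namespace LevyOU

variable {d : ℕ}

/-! For `‖y‖ > 1` the contraction `‖e^{sB} y‖ ≤ ‖y‖ e^{-as}` means that the `s`-integrand lives
where `u(s) = ‖y‖ e^{-as} > 1`, and there `e^{κ u} ≤ u e^{κ u} = -(aκ)⁻¹ d/ds e^{κ u(s)}`, so the
`s`-integral is at most `e^{κ‖y‖} / (aκ)`. Since `{‖e^{sB} y‖ > 1} ⊆ {‖y‖ > 1}` and `Π` restricted
to `{‖y‖ > 1}` is finite, Tonelli reduces the claim to the exponential moment of `Π`. -/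

open scoped Matrix.Norms.L2Operator in
@[fun_prop]
theorem continuous_expCLM (B : Matrix (Fin d) (Fin d) ℝ) : Continuous (expCLM B) := by
  have hexp : Continuous fun s : ℝ => NormedSpace.exp (s • B) :=
    continuous_iff_continuousAt.2 fun s => (hasDerivAt_exp_smul_const (𝕂 := ℝ) B s).continuousAt
  exact (toEuclideanCLM (𝕜 := ℝ) (n := Fin d)).toAlgEquiv.toLinearMap
    |>.continuous_of_finiteDimensional.comp hexp

end LevyOU

section

open Real Filter Topology

theorem lintegral_Ioi_mul_exp_neg_mul_exp {a κ r : ℝ} (ha : 0 < a) (hκ : κ ≠ 0) (hr : 0 ≤ r) :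
    ∫⁻ s in Ioi 0, ENNReal.ofReal (r * exp (-a * s) * exp (κ * (r * exp (-a * s)))) =
      ENNReal.ofReal ((exp (κ * r) - 1) / (a * κ)) := by
  set g : ℝ → ℝ := fun s => -exp (κ * (r * exp (-a * s))) / (a * κ)
  have hderiv : ∀ s, HasDerivAt g (r * exp (-a * s) * exp (κ * (r * exp (-a * s)))) s := by
    intro s
    refine ((((hasDerivAt_id s).const_mul (-a)).exp.const_mul r).const_mul κ).exp.neg.div_const
      (a * κ) |>.congr_deriv ?_
    simp only [id]
    field_simp
  have hnonneg : ∀ s, 0 ≤ r * exp (-a * s) * exp (κ * (r * exp (-a * s))) := fun s => by positivity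
  have hlim : Tendsto g atTop (𝓝 (-1 / (a * κ))) := by
    have hdecay : Tendsto (fun s => exp (-a * s)) atTop (𝓝 0) :=
      tendsto_exp_atBot.comp (tendsto_id.const_mul_atTop_of_neg (neg_neg_of_pos ha))
    have hcont : Continuous fun u : ℝ => -exp (κ * (r * u)) / (a * κ) := by fun_prop
    have h := (hcont.tendsto 0).comp hdecay
    simp only [mul_zero, exp_zero] at h
    exact h
  have hcont : ContinuousWithinAt g (Ici 0) 0 := (hderiv 0).continuousAt.continuousWithinAt
  rw [← ofReal_integral_eq_lintegral_ofReal
      (integrableOn_Ioi_deriv_of_nonneg hcont (fun s _ => hderiv s) (fun s _ => hnonneg s) hlim)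
      (Eventually.of_forall hnonneg),
    integral_Ioi_of_hasDerivAt_of_nonneg hcont (fun s _ => hderiv s) (fun s _ => hnonneg s) hlim]
  congr 1
  simp only [g, mul_zero, exp_zero, mul_one]
  ring

theorem lintegral_Ioi_indicator_exp_le {f : ℝ → ℝ} {a κ r : ℝ} (ha : 0 < a) (hκ : 0 < κ)
    (hr : 0 ≤ r) (hf : ∀ s > 0, f s ≤ r * exp (-a * s)) :
    ∫⁻ s in Ioi 0, {s | 1 < f s}.indicator (fun s => ENNReal.ofReal (exp (κ * f s))) s ≤
      ENNReal.ofReal (exp (κ * r) / (a * κ)) := calc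
  _ ≤ ∫⁻ s in Ioi 0, ENNReal.ofReal (r * exp (-a * s) * exp (κ * (r * exp (-a * s)))) := by
    refine setLIntegral_mono' measurableSet_Ioi fun s hs => ?_
    by_cases hfs : 1 < f s
    · have hu : 1 ≤ r * exp (-a * s) := (hfs.trans_le (hf s hs)).le
      rw [indicator_of_mem (show s ∈ {s | 1 < f s} from hfs)]
      refine ENNReal.ofReal_le_ofReal ?_
      calc exp (κ * f s) ≤ exp (κ * (r * exp (-a * s))) := by gcongr; exact hf s hs
        _ ≤ _ := le_mul_of_one_le_left (exp_nonneg _) hu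
    · rw [indicator_of_notMem (show s ∉ {s | 1 < f s} from hfs)]
      positivity
  _ = ENNReal.ofReal ((exp (κ * r) - 1) / (a * κ)) :=
    lintegral_Ioi_mul_exp_neg_mul_exp ha hκ.ne' hr
  _ ≤ _ := by gcongr; linarith

end

namespace LevyOU

theorem levy_measure_exponential_moment_transfer_general
    {d : ℕ}
    (B : Matrix (Fin d) (Fin d) ℝ) (a : ℝ) (ha : 0 < a)
    (hop : ∀ s : ℝ, 0 ≤ s →
      ‖Matrix.toEuclideanCLM (𝕜 := ℝ) (NormedSpace.exp (s • B))‖ ≤ Real.exp (-a * s))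
    (Pim : Measure (E d))
    (κ : ℝ) (hκ : 0 < κ)
    (hexp : ∫⁻ y in {y : E d | 1 < ‖y‖}, ENNReal.ofReal (Real.exp (κ * ‖y‖)) ∂Pim < ⊤) :
    ∫⁻ s in Set.Ioi (0 : ℝ),
      ∫⁻ y in {y : E d | 1 < ‖expCLM B s y‖},
        ENNReal.ofReal (Real.exp (κ * ‖expCLM B s y‖)) ∂Pim < ⊤ := by
  set S := {y : E d | 1 < ‖y‖}
  have hdecay (s : ℝ) (hs : 0 ≤ s) (y : E d) : ‖expCLM B s y‖ ≤ ‖y‖ * Real.exp (-a * s) :=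
    ((expCLM B s).le_opNorm y).trans (by rw [mul_comm]; gcongr; exact hop s hs)
  have hsub (s : ℝ) (hs : 0 ≤ s) : {y | 1 < ‖expCLM B s y‖} ⊆ S := fun y hy =>
    hy.trans_le <| (hdecay s hs y).trans <| mul_le_of_le_one_right (norm_nonneg y) <|
      Real.exp_le_one_iff.2 (by nlinarith)
  have : IsFiniteMeasure (Pim.restrict S) := ⟨lintegral_one (μ := Pim.restrict S) ▸
    (lintegral_mono fun _ => ENNReal.one_le_ofReal.2 (Real.one_le_exp (by positivity))).trans_lt
      hexp⟩
  have hmeas : Measurable fun p : ℝ × E d => {y | 1 < ‖expCLM B p.1 y‖}.indicator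
      (fun y => ENNReal.ofReal (Real.exp (κ * ‖expCLM B p.1 y‖))) p.2 :=
    Measurable.indicator (by fun_prop) (measurableSet_lt measurable_const (by fun_prop))
  calc _ = ∫⁻ s in Ioi 0, ∫⁻ y in S, {y | 1 < ‖expCLM B s y‖}.indicator
        (fun y => ENNReal.ofReal (Real.exp (κ * ‖expCLM B s y‖))) y ∂Pim := by
        refine setLIntegral_congr_fun measurableSet_Ioi fun s hs => ?_
        rw [lintegral_indicator (measurableSet_lt measurable_const (by fun_prop)),
          Measure.restrict_restrict (measurableSet_lt measurable_const (by fun_prop)),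
          inter_eq_left.2 (hsub s hs.le)]
    _ = ∫⁻ y in S, (∫⁻ s in Ioi 0, {y | 1 < ‖expCLM B s y‖}.indicator
        (fun y => ENNReal.ofReal (Real.exp (κ * ‖expCLM B s y‖))) y) ∂Pim :=
      lintegral_lintegral_swap hmeas.aemeasurable
    _ ≤ ∫⁻ y in S, ENNReal.ofReal (Real.exp (κ * ‖y‖)) * ENNReal.ofReal (a * κ)⁻¹ ∂Pim := by
      refine lintegral_mono fun y => ?_
      rw [← ENNReal.ofReal_mul (by positivity), ← div_eq_mul_inv]
      exact lintegral_Ioi_indicator_exp_le ha hκ (norm_nonneg y) fun s hs => hdecay s hs.le y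
    _ < ⊤ := by
      rw [lintegral_mul_const' _ _ ENNReal.ofReal_ne_top]
      exact ENNReal.mul_lt_top hexp ENNReal.ofReal_lt_top

/-- Lemma 6.3, exponential moments: transfer of exponential moments
from `Π` to `Π_∞`. -/
theorem levy_measure_exponential_moment_transfer
    {d : ℕ} (hd : 0 < d)
    (B : Matrix (Fin d) (Fin d) ℝ) (a : ℝ) (ha : 0 < a)
    (hop : ∀ s : ℝ, 0 ≤ s →
      ‖Matrix.toEuclideanCLM (𝕜 := ℝ) (NormedSpace.exp (s • B))‖ ≤ Real.exp (-a * s))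
    (Pim : Measure (E d))
    (hlog : ∫⁻ y in {y : E d | 1 < ‖y‖}, ENNReal.ofReal (Real.log ‖y‖) ∂Pim < ⊤)
    (κ : ℝ) (hκ : 0 < κ)
    (hexp : ∫⁻ y in {y : E d | 1 < ‖y‖}, ENNReal.ofReal (Real.exp (κ * ‖y‖)) ∂Pim < ⊤) :
    ∫⁻ s in Set.Ioi (0 : ℝ),
      ∫⁻ y in {y : E d | 1 < ‖expCLM B s y‖},
        ENNReal.ofReal (Real.exp (κ * ‖expCLM B s y‖)) ∂Pim < ⊤ :=
  levy_measure_exponential_moment_transfer_general B a ha hop Pim κ hκ hexp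
end LevyOU
end
end

section
/- Let d ≥ 1, 1 < p < ∞ and m > 0. Let q be a nonzero polynomial on ℝ^d and suppose that for some coordinate j ∈ {1,…,d} the degree k of q in the variable x_j satisfies p·k ≥ m. Then ∫_{ℝ^d} |q(x)|^p (2 + |x|)^{−m} dx = ∞. -/
/-!
Split off the `j`-th coordinate, `x = (t, y)`, and view `q` as a polynomial in `t` with
coefficients polynomials in `y`. Wherever its leading coefficient `c(y)` does not vanish,
`t ↦ q(t, y)` has degree `k`, so for large `t` we get `|q(t, y)|^p ≳ t^{pk}` and
`(2 + |x|)^{-m} ≳ t^{-m}`; as `pk ≥ m`, the integral over that line diverges. Since `c ≠ 0`,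
the set `{c ≠ 0}` is a nonempty open set, hence of positive measure, and Tonelli concludes.
-/

open MeasureTheory Measure Matrix Set
open scoped ENNReal NNReal InnerProductSpace

noncomputable section

open Filter Polynomial in
theorem Polynomial.exists_pos_eventually_mul_pow_le_abs_eval {P : ℝ[X]} (hP : P ≠ 0) :
    ∃ c > 0, ∀ᶠ t in atTop, c * t ^ P.natDegree ≤ |P.eval t| := by
  obtain ⟨C, hC, hbound⟩ := P.isEquivalent_atTop_lead.symm.isBigO.exists_pos
  have ha : 0 < |P.leadingCoeff| := abs_pos.2 (leadingCoeff_ne_zero.2 hP)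
  refine ⟨|P.leadingCoeff| / C, div_pos ha hC, ?_⟩
  filter_upwards [hbound.bound, eventually_ge_atTop 0] with t ht ht0
  rw [Real.norm_eq_abs, Real.norm_eq_abs, abs_mul, abs_pow, abs_of_nonneg ht0] at ht
  rw [div_mul_eq_mul_div, div_le_iff₀ hC]
  linarith

open Filter in
theorem lintegral_eq_top_of_eventually_atTop_le {f : ℝ → ℝ≥0∞} {c : ℝ≥0∞} (hc : c ≠ 0)
    (hf : ∀ᶠ t in atTop, c ≤ f t) : ∫⁻ t, f t = ⊤ := by
  obtain ⟨T, hT⟩ := eventually_atTop.1 hf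
  refine top_unique ?_
  calc ⊤ = ∫⁻ _ in Ici T, c := by simp [hc]
    _ ≤ ∫⁻ t in Ici T, f t := setLIntegral_mono' measurableSet_Ici fun t ht => hT t ht
    _ ≤ ∫⁻ t, f t := setLIntegral_le_lintegral _ _

open Filter Polynomial in
theorem Polynomial.lintegral_abs_eval_rpow_mul_rpow_neg_eq_top {P : ℝ[X]} (hP : P ≠ 0)
    {p m A : ℝ} (hp : 0 ≤ p) (hm : 0 ≤ m) (hA : 0 ≤ A) (hdeg : m ≤ p * P.natDegree) :
    ∫⁻ t, ENNReal.ofReal (|P.eval t| ^ p * (A + |t|) ^ (-m)) = ⊤ := by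
  obtain ⟨c, hc, hlow⟩ := exists_pos_eventually_mul_pow_le_abs_eval hP
  refine lintegral_eq_top_of_eventually_atTop_le
    (c := ENNReal.ofReal (c ^ p * (A + 1) ^ (-m))) (by positivity) ?_
  filter_upwards [hlow, eventually_ge_atTop 1] with t hPt ht
  have ht0 : 0 < t := by linarith
  refine ENNReal.ofReal_le_ofReal ?_
  calc c ^ p * (A + 1) ^ (-m)
      ≤ c ^ p * (A + 1) ^ (-m) * t ^ (p * P.natDegree - m) :=
        le_mul_of_one_le_right (by positivity) (Real.one_le_rpow ht (by linarith))
    _ = (c * t ^ P.natDegree) ^ p * ((A + 1) * t) ^ (-m) := by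
        rw [Real.mul_rpow hc.le (by positivity), Real.mul_rpow (by linarith) ht0.le,
          ← Real.rpow_natCast, ← Real.rpow_mul ht0.le, mul_comm (P.natDegree : ℝ) p,
          Real.rpow_sub ht0, Real.rpow_neg ht0.le]
        ring
    _ ≤ |P.eval t| ^ p * (A + |t|) ^ (-m) := by
        gcongr ?_ * ?_
        · exact Real.rpow_le_rpow (by positivity) hPt hp
        · exact Real.rpow_le_rpow_of_nonpos (by positivity) (by rw [abs_of_pos ht0]; nlinarith)
            (neg_nonpos.2 hm)

theorem lintegral_prod_eq_top_of_measure_ne_zero {α β : Type*} [MeasurableSpace α]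
    [MeasurableSpace β] {μ : Measure α} {ν : Measure β} [SFinite μ] [SFinite ν]
    {f : α × β → ℝ≥0∞} (hf : Measurable f) (h : ν {y | ∫⁻ x, f (x, y) ∂μ = ⊤} ≠ 0) :
    ∫⁻ z, f z ∂(μ.prod ν) = ⊤ := by
  rw [lintegral_prod_symm' f hf]
  exact lintegral_eq_top_of_measure_eq_top_ne_zero hf.lintegral_prod_left'.aemeasurable h

namespace MvPolynomial

theorem measure_setOf_eval_ne_zero_pos {ι : Type*} (μ : Measure (ι → ℝ)) [μ.IsOpenPosMeasure]
    {c : MvPolynomial ι ℝ} (hc : c ≠ 0) : 0 < μ {y | eval y c ≠ 0} := by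
  obtain ⟨y₀, hy₀⟩ : ∃ y, eval y c ≠ 0 := by
    by_contra! h
    exact hc (funext fun y => by simp [h y])
  exact (isOpen_ne_fun (continuous_eval c) continuous_const).measure_pos μ ⟨y₀, hy₀⟩

variable (R : Type*) [CommSemiring R] {n : ℕ}

def finSuccEquiv' (j : Fin (n + 1)) :
    MvPolynomial (Fin (n + 1)) R ≃ₐ[R] Polynomial (MvPolynomial (Fin n) R) :=
  (renameEquiv R (_root_.finSuccEquiv' j)).trans (optionEquivLeft R (Fin n))

variable {R}

theorem natDegree_finSuccEquiv' (j : Fin (n + 1)) (q : MvPolynomial (Fin (n + 1)) R) :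
    (finSuccEquiv' R j q).natDegree = q.degreeOf j := by
  rw [finSuccEquiv', AlgEquiv.trans_apply, natDegree_optionEquivLeft, renameEquiv_apply,
    ← finSuccEquiv'_at j, degreeOf_rename_of_injective (Equiv.injective _)]

theorem eval_insertNth_eq_eval_map_finSuccEquiv' (j : Fin (n + 1)) (t : R) (y : Fin n → R)
    (q : MvPolynomial (Fin (n + 1)) R) :
    eval (j.insertNth t y) q = Polynomial.eval t ((finSuccEquiv' R j q).map (eval y)) := by
  rw [finSuccEquiv', AlgEquiv.trans_apply, ← optionEquivLeft_elim_eval, renameEquiv_apply,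
    eval_rename]
  congr 2 with i
  cases i using j.succAboveCases <;> simp

end MvPolynomial

namespace EuclideanSpace

variable {n : ℕ}

theorem norm_sq_insertNth (j : Fin (n + 1)) (t : ℝ) (y : Fin n → ℝ) :
    ‖WithLp.toLp 2 (j.insertNth t y : Fin (n + 1) → ℝ)‖ ^ 2 =
      t ^ 2 + ‖WithLp.toLp 2 y‖ ^ 2 := by
  simp [real_norm_sq_eq, Fin.sum_univ_succAbove _ j]

theorem norm_insertNth_le (j : Fin (n + 1)) (t : ℝ) (y : Fin n → ℝ) :
    ‖WithLp.toLp 2 (j.insertNth t y : Fin (n + 1) → ℝ)‖ ≤ |t| + ‖WithLp.toLp 2 y‖ := by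
  refine le_of_sq_le_sq ?_ (by positivity)
  rw [norm_sq_insertNth, add_sq, sq_abs]
  nlinarith [abs_nonneg t, norm_nonneg (WithLp.toLp 2 y)]

theorem lintegral_eq_lintegral_insertNth (j : Fin (n + 1))
    (f : EuclideanSpace ℝ (Fin (n + 1)) → ℝ≥0∞) :
    ∫⁻ x, f x =
      ∫⁻ z : ℝ × (Fin n → ℝ), f (WithLp.toLp 2 (j.insertNth z.1 z.2 : Fin (n + 1) → ℝ)) := by
  have h := ((volume_preserving_symm_measurableEquiv_toLp (Fin (n + 1))).symm _).comp
    ((volume_preserving_piFinSuccAbove (fun _ : Fin (n + 1) => ℝ) j).symm _)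
  rw [← h.lintegral_comp_emb
    ((MeasurableEquiv.measurableEmbedding _).comp (MeasurableEquiv.measurableEmbedding _))]
  rfl

end EuclideanSpace

namespace LevyOU

open MvPolynomial in
theorem lintegral_abs_eval_insertNth_rpow_mul_rpow_neg_eq_top {n : ℕ}
    {q : MvPolynomial (Fin (n + 1)) ℝ} {j : Fin (n + 1)} {y : Fin n → ℝ}
    (hy : eval y (finSuccEquiv' ℝ j q).leadingCoeff ≠ 0) {p m : ℝ} (hp : 0 ≤ p) (hm : 0 ≤ m)
    (hdeg : m ≤ p * q.degreeOf j) :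
    ∫⁻ t, ENNReal.ofReal (|eval (j.insertNth t y) q| ^ p *
      (2 + ‖WithLp.toLp 2 (j.insertNth t y : Fin (n + 1) → ℝ)‖) ^ (-m)) = ⊤ := by
  set g := (finSuccEquiv' ℝ j q).map (eval y)
  have hg : g ≠ 0 := by
    rwa [← Polynomial.leadingCoeff_ne_zero,
      Polynomial.leadingCoeff_map_of_leadingCoeff_ne_zero _ hy]
  have hgdeg : g.natDegree = q.degreeOf j := by
    rw [Polynomial.natDegree_map_of_leadingCoeff_ne_zero _ hy, natDegree_finSuccEquiv']
  have hline := Polynomial.lintegral_abs_eval_rpow_mul_rpow_neg_eq_top hg hp hm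
    (by positivity : 0 ≤ 2 + ‖WithLp.toLp 2 y‖) (by rwa [hgdeg])
  refine eq_top_mono (lintegral_mono fun t => ENNReal.ofReal_le_ofReal ?_) hline
  rw [eval_insertNth_eq_eval_map_finSuccEquiv']
  refine mul_le_mul_of_nonneg_left (Real.rpow_le_rpow_of_nonpos (by positivity) ?_
    (neg_nonpos.2 hm)) (by positivity)
  linarith [EuclideanSpace.norm_insertNth_le j t y]

theorem polynomial_not_integrable_against_polynomial_weight_general
    {d : ℕ} (p m : ℝ) (hm : 0 < m)
    (q : MvPolynomial (Fin d) ℝ) (j : Fin d)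
    (hdeg : m ≤ p * (q.degreeOf j : ℝ)) :
    ∫⁻ x : E d, ENNReal.ofReal
      (|MvPolynomial.eval (fun i => x i) q| ^ p * (2 + ‖x‖) ^ (-m)) = ⊤ := by
  obtain ⟨n, rfl⟩ : ∃ n, d = n + 1 := Nat.exists_eq_succ_of_ne_zero j.pos.ne'
  have hpk : 0 < p * q.degreeOf j := hm.trans_le hdeg
  have hp : 0 < p := pos_of_mul_pos_left hpk (Nat.cast_nonneg _)
  have hk : 0 < q.degreeOf j := by
    contrapose! hpk
    simp [Nat.le_zero.1 hpk]
  have hc : (MvPolynomial.finSuccEquiv' ℝ j q).leadingCoeff ≠ 0 :=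
    Polynomial.leadingCoeff_ne_zero.2 (Polynomial.ne_zero_of_natDegree_gt
      (by rwa [MvPolynomial.natDegree_finSuccEquiv']))
  have hq_cont := MvPolynomial.continuous_eval q
  rw [EuclideanSpace.lintegral_eq_lintegral_insertNth j]
  refine lintegral_prod_eq_top_of_measure_ne_zero (by fun_prop) ?_
  refine ((MvPolynomial.measure_setOf_eval_ne_zero_pos volume hc).trans_le
    (measure_mono fun y hy => ?_)).ne'
  exact lintegral_abs_eval_insertNth_rpow_mul_rpow_neg_eq_top hy hp.le hm.le hdeg

/-- non-integrability lemma in the proof of Theorem 3.7: a nonzero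
polynomial whose degree `k` in some variable satisfies `p·k ≥ m` is not `p`-integrable
against the weight `(2+|x|)^{-m}`. -/
theorem polynomial_not_integrable_against_polynomial_weight
    {d : ℕ} (hd : 0 < d) (p m : ℝ) (hp : 1 < p) (hm : 0 < m)
    (q : MvPolynomial (Fin d) ℝ) (hq : q ≠ 0) (j : Fin d)
    (hdeg : m ≤ p * (q.degreeOf j : ℝ)) :
    ∫⁻ x : E d, ENNReal.ofReal
      (|MvPolynomial.eval (fun i => x i) q| ^ p * (2 + ‖x‖) ^ (-m)) = ⊤ :=
  polynomial_not_integrable_against_polynomial_weight_general p m hm q j hdeg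
end LevyOU
end
end

section
/- Let μ̄ be a probability measure on ℝ^d, and let b, b' : ℝ^d → [0,∞) be measurable probability densities (∫ b = ∫ b' = 1) with b symmetric (b(−x) = b(x)) and b'(x) ≤ K·b(x) for all x, for some constant K > 0. Let μ be the measure on ℝ^d with Lebesgue density x ↦ ∫ b(x − y) dμ̄(y). Then for every 1 ≤ p < ∞ and every measurable f : ℝ^d → ℝ, ∫_{ℝ^d} |(b' ∗ f)(x)|^p dμ̄(x) ≤ K ∫_{ℝ^d} |f|^p dμ, where (b' ∗ f)(x) := ∫ f(y) b'(x − y) dy. -/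
open MeasureTheory Measure Matrix Set
open scoped ENNReal NNReal InnerProductSpace

noncomputable section

namespace LevyOU

variable {d : ℕ}

/-!
Jensen's inequality for the probability density `b' (x - ·)` bounds `|b' ∗ f|^p` pointwise by
`b' ∗ |f|^p`, and `b' ≤ K b` then bounds this by `K (b ∗ |f|^p)`. Integrating against `μ̄` and
swapping the integrals (Tonelli), the symmetry of `b` turns `∫ (b ∗ |f|^p) dμ̄` into the integral
of `|f|^p` against the density `y ↦ ∫ b (y - x) dμ̄(x)` of `μ`.
-/
section

variable {α : Type*} [MeasurableSpace α]

theorem lintegral_ofReal_eq_one_of_integral_eq_one {ν : Measure α} {f : α → ℝ} (hf0 : 0 ≤ f)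
    (hf1 : ∫ a, f a ∂ν = 1) : ∫⁻ a, ENNReal.ofReal (f a) ∂ν = 1 := by
  rw [← ofReal_integral_eq_lintegral_ofReal (.of_integral_ne_zero (by simp [hf1]))
    (ae_of_all _ hf0), hf1, ENNReal.ofReal_one]

theorem rpow_lintegral_le_lintegral_rpow (ν : Measure α) [IsProbabilityMeasure ν]
    {g : α → ℝ≥0∞} (hg : AEMeasurable g ν) {p : ℝ} (hp : 1 ≤ p) :
    (∫⁻ a, g a ∂ν) ^ p ≤ ∫⁻ a, g a ^ p ∂ν := by
  have hp0 : 0 < p := zero_lt_one.trans_le hp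
  have hLp : eLpNorm g 1 ν ≤ eLpNorm g (ENNReal.ofReal p) ν :=
    eLpNorm_le_eLpNorm_of_exponent_le (by simpa using hp) hg.aestronglyMeasurable
  rw [eLpNorm_one_eq_lintegral_enorm,
    eLpNorm_eq_lintegral_rpow_enorm_toReal (by simpa using hp0) ENNReal.ofReal_ne_top,
    ENNReal.toReal_ofReal hp0.le] at hLp
  simpa [← ENNReal.rpow_mul, inv_mul_cancel₀ hp0.ne'] using ENNReal.rpow_le_rpow hLp hp0.le

theorem ofReal_abs_integral_mul_rpow_le (ν : Measure α) {w : α → ℝ} (hw : Measurable w)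
    (hw0 : 0 ≤ w) (hw1 : ∫⁻ a, ENNReal.ofReal (w a) ∂ν = 1) {f : α → ℝ} (hf : Measurable f)
    {p : ℝ} (hp : 1 ≤ p) :
    ENNReal.ofReal (|∫ a, f a * w a ∂ν| ^ p) ≤
      ∫⁻ a, ENNReal.ofReal (w a) * ENNReal.ofReal (|f a| ^ p) ∂ν := by
  have hp0 : 0 ≤ p := zero_le_one.trans hp
  set ρ := ν.withDensity fun a => ENNReal.ofReal (w a)
  have : IsProbabilityMeasure ρ := ⟨by simpa [ρ] using hw1⟩
  have hw' : Measurable fun a => ENNReal.ofReal (w a) := hw.ennreal_ofReal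
  calc ENNReal.ofReal (|∫ a, f a * w a ∂ν| ^ p)
      = ‖∫ a, f a * w a ∂ν‖ₑ ^ p := by
        rw [Real.enorm_eq_ofReal_abs, ENNReal.ofReal_rpow_of_nonneg (abs_nonneg _) hp0]
    _ ≤ (∫⁻ a, ‖f a‖ₑ ∂ρ) ^ p := by
        gcongr
        refine (enorm_integral_le_lintegral_enorm _).trans_eq ?_
        rw [lintegral_withDensity_eq_lintegral_mul _ hw' hf.enorm]
        refine lintegral_congr fun a => ?_
        simp [enorm_mul, Real.enorm_of_nonneg (hw0 a), mul_comm]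
    _ ≤ ∫⁻ a, ‖f a‖ₑ ^ p ∂ρ := rpow_lintegral_le_lintegral_rpow ρ hf.enorm.aemeasurable hp
    _ = _ := by
        rw [lintegral_withDensity_eq_lintegral_mul _ hw' (hf.enorm.pow_const p)]
        refine lintegral_congr fun a => ?_
        simp [Real.enorm_eq_ofReal_abs, ENNReal.ofReal_rpow_of_nonneg (abs_nonneg _) hp0]

end

section

variable {G : Type*} [AddGroup G] [MeasurableSpace G] [MeasurableSub₂ G]
  (ν μ : Measure G) [SFinite ν] [SFinite μ] {B g : G → ℝ≥0∞}

theorem lintegral_withDensity_lintegral_sub (hB : Measurable B) (hg : Measurable g) :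
    ∫⁻ y, g y ∂ν.withDensity (fun y => ∫⁻ x, B (y - x) ∂μ) =
      ∫⁻ x, ∫⁻ y, B (y - x) * g y ∂ν ∂μ := by
  have hBsub : Measurable fun q : G × G => B (q.1 - q.2) := hB.comp measurable_sub
  rw [lintegral_withDensity_eq_lintegral_mul _ hBsub.lintegral_prod_right' hg,
    lintegral_lintegral_swap
      ((hB.comp (measurable_snd.sub measurable_fst)).mul (hg.comp measurable_snd)).aemeasurable]
  exact lintegral_congr fun y =>
    (lintegral_mul_const _ (hB.comp (measurable_const.sub measurable_id))).symm

theorem lintegral_lintegral_sub_eq_mul [MeasurableAdd G] [IsAddRightInvariant ν]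
    (hB : Measurable B) :
    ∫⁻ y, ∫⁻ x, B (y - x) ∂μ ∂ν = μ univ * ∫⁻ z, B z ∂ν := by
  rw [lintegral_lintegral_swap (f := fun y x => B (y - x))
    (hB.comp measurable_sub).aemeasurable]
  simp [lintegral_sub_right_eq_self, mul_comm]

theorem withDensity_ofReal_integral_sub_eq_lintegral [MeasurableAdd G] [IsAddRightInvariant ν]
    [IsFiniteMeasure μ] {b : G → ℝ} (hb : Measurable b) (hb0 : 0 ≤ b) (hbi : Integrable b ν) :
    ν.withDensity (fun y => ENNReal.ofReal (∫ x, b (y - x) ∂μ)) =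
      ν.withDensity (fun y => ∫⁻ x, ENNReal.ofReal (b (y - x)) ∂μ) := by
  have hB : Measurable fun z => ENNReal.ofReal (b z) := hb.ennreal_ofReal
  have hfin : ∫⁻ y, ∫⁻ x, ENNReal.ofReal (b (y - x)) ∂μ ∂ν ≠ ∞ := by
    rw [lintegral_lintegral_sub_eq_mul ν μ hB]
    exact ENNReal.mul_ne_top (measure_ne_top μ univ)
      ((lintegral_ofReal_ne_top_iff_integrable hbi.1 (ae_of_all _ hb0)).2 hbi)
  refine withDensity_congr_ae ?_
  -- `μ univ * ∫ b < ∞` makes the lower-integral density finite a.e., so there `b (y - ·)` is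
  -- `μ`-integrable and its Bochner integral is not the junk value `0`.
  filter_upwards [ae_lt_top (hB.comp measurable_sub).lintegral_prod_right' hfin] with y hy
  have hby : Measurable fun x => b (y - x) := hb.comp (measurable_const.sub measurable_id)
  exact ofReal_integral_eq_lintegral_ofReal
    ((lintegral_ofReal_ne_top_iff_integrable hby.aestronglyMeasurable
      (ae_of_all _ fun x => hb0 (y - x))).1 hy.ne) (ae_of_all _ fun x => hb0 (y - x))

end

theorem convolution_transfer_estimate_general
    {d : ℕ}
    (μb : Measure (E d)) [IsProbabilityMeasure μb]
    (b b' : E d → ℝ) (hbm : Measurable b) (hb'm : Measurable b')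
    (hb0 : ∀ x, 0 ≤ b x) (hb'0 : ∀ x, 0 ≤ b' x)
    (hbint : ∫ x, b x = 1) (hb'int : ∫ x, b' x = 1)
    (hbsymm : ∀ x, b (-x) = b x)
    (K : ℝ) (hK : 0 < K) (hdom : ∀ x, b' x ≤ K * b x)
    (μ : Measure (E d))
    (hμ : μ = volume.withDensity fun x => ENNReal.ofReal (∫ y, b (x - y) ∂μb))
    (p : ℝ) (hp : 1 ≤ p) (f : E d → ℝ) (hf : Measurable f) :
    ∫⁻ x, ENNReal.ofReal (|∫ y, f y * b' (x - y)| ^ p) ∂μb ≤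
      ENNReal.ofReal K * ∫⁻ x, ENNReal.ofReal (|f x| ^ p) ∂μ := by
  have hb'1 := lintegral_ofReal_eq_one_of_integral_eq_one hb'0 hb'int
  have hbi : Integrable b := .of_integral_ne_zero (by simp [hbint])
  rw [hμ, withDensity_ofReal_integral_sub_eq_lintegral volume μb hbm hb0 hbi,
    lintegral_withDensity_lintegral_sub volume μb hbm.ennreal_ofReal
      (hf.abs.pow_const p).ennreal_ofReal,
    ← lintegral_const_mul' _ _ ENNReal.ofReal_ne_top]
  refine lintegral_mono fun x => ?_
  calc ENNReal.ofReal (|∫ y, f y * b' (x - y)| ^ p)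
      ≤ ∫⁻ y, ENNReal.ofReal (b' (x - y)) * ENNReal.ofReal (|f y| ^ p) :=
        ofReal_abs_integral_mul_rpow_le (w := fun y => b' (x - y)) volume
          (hb'm.comp (measurable_const.sub measurable_id)) (fun y => hb'0 _)
          (by rwa [lintegral_sub_left_eq_self (fun z => ENNReal.ofReal (b' z)) x]) hf hp
    _ ≤ ∫⁻ y, ENNReal.ofReal K * (ENNReal.ofReal (b (y - x)) * ENNReal.ofReal (|f y| ^ p)) := by
        refine lintegral_mono fun y => ?_
        rw [← mul_assoc, ← ENNReal.ofReal_mul hK.le, ← hbsymm, neg_sub]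
        gcongr
        exact hdom _
    _ = ENNReal.ofReal K * ∫⁻ y, ENNReal.ofReal (b (y - x)) * ENNReal.ofReal (|f y| ^ p) :=
        lintegral_const_mul' _ _ ENNReal.ofReal_ne_top

/-- transfer estimate in the proof of Theorem 3.8:
`∫ |b' ∗ f|^p dμ̄ ≤ K ∫ |f|^p dμ` where `μ` has density `x ↦ ∫ b(x−y) dμ̄(y)`. -/
theorem convolution_transfer_estimate
    {d : ℕ} (hd : 0 < d)
    (μb : Measure (E d)) [IsProbabilityMeasure μb]
    (b b' : E d → ℝ) (hbm : Measurable b) (hb'm : Measurable b')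
    (hb0 : ∀ x, 0 ≤ b x) (hb'0 : ∀ x, 0 ≤ b' x)
    (hbint : ∫ x, b x = 1) (hb'int : ∫ x, b' x = 1)
    (hbsymm : ∀ x, b (-x) = b x)
    (K : ℝ) (hK : 0 < K) (hdom : ∀ x, b' x ≤ K * b x)
    (μ : Measure (E d))
    (hμ : μ = volume.withDensity fun x => ENNReal.ofReal (∫ y, b (x - y) ∂μb))
    (p : ℝ) (hp : 1 ≤ p) (f : E d → ℝ) (hf : Measurable f) :
    ∫⁻ x, ENNReal.ofReal (|∫ y, f y * b' (x - y)| ^ p) ∂μb ≤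
      ENNReal.ofReal K * ∫⁻ x, ENNReal.ofReal (|f x| ^ p) ∂μ :=
  convolution_transfer_estimate_general μb b b' hbm hb'm hb0 hb'0 hbint hb'int hbsymm K hK hdom μ hμ
    p hp f hf
end LevyOU
end
end
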